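/- In HH_N(q,t), with D_i = T_{i−1}^{-1}⋯T_1^{-1} X_1^{-1}(Y_1−1) T_1^{-1}⋯T_{i−1}^{-1}, one has X_1 D_2 = D_2 T_1² X_1 + (𝐭 − 𝐭^{-1}) T_1^{-1} and D_1 X_2 = X_2 T_1^{-2} D_1 − (𝐭 − 𝐭^{-1}) T_1. -/

import Mathlib

/-!
The quadratic relation (R1) together with the invertibility of `T₁` gives
`T₁ = (𝐭 - 𝐭⁻¹) + T₁⁻¹`. By (R4) and (R11), `X₁` commutes with `X₂⁻¹ = T₁⁻¹X₁⁻¹T₁⁻¹`, and (R6)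
turns (R8), i.e. `X₁Y₂ = Y₂X₁T₁²`, into `X₁T₁Y₁ = T₁Y₁T₁X₁T₁`. Expanding `D₁ = X₁⁻¹(Y₁ - 1)` and
`D₂ = T₁⁻¹D₁T₁⁻¹`, these two exchange relations match the terms containing `Y₁` on both sides,
and the remaining terms differ by the Hecke correction `(𝐭 - 𝐭⁻¹)T₁^{∓1}`.
-/

/-- Cherednik's double affine Hecke algebra HH_N(q,t), t = 𝐭², presented by the
relations (R1)–(R12); an algebra A together with elements satisfying the
relations (generators indexed 1,…,N resp. 1,…,N−1). -/
structure DAHA (N : ℕ) (q bt : ℂ) (A : Type*) [Ring A] [Algebra ℂ A] where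
  T : ℕ → A
  Tinv : ℕ → A
  X : ℕ → A
  Xinv : ℕ → A
  Y : ℕ → A
  Yinv : ℕ → A
  hT : ∀ i, 1 ≤ i → i ≤ N - 1 → T i * Tinv i = 1 ∧ Tinv i * T i = 1
  hX : ∀ i, 1 ≤ i → i ≤ N → X i * Xinv i = 1 ∧ Xinv i * X i = 1
  hY : ∀ i, 1 ≤ i → i ≤ N → Y i * Yinv i = 1 ∧ Yinv i * Y i = 1
  R1 : ∀ i, 1 ≤ i → i ≤ N - 1 →
    (T i - algebraMap ℂ A bt) * (T i + algebraMap ℂ A bt⁻¹) = 0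
  R2 : ∀ i, 1 ≤ i → i + 1 ≤ N - 1 → T i * T (i + 1) * T i = T (i + 1) * T i * T (i + 1)
  R3 : ∀ i j, 1 ≤ i → i ≤ N - 1 → 1 ≤ j → j ≤ N - 1 → i + 2 ≤ j → T i * T j = T j * T i
  R4 : ∀ i, 1 ≤ i → i ≤ N - 1 → T i * X i * T i = X (i + 1)
  R5 : ∀ i j, 1 ≤ i → i ≤ N - 1 → 1 ≤ j → j ≤ N → j ≠ i → j ≠ i + 1 → T i * X j = X j * T i
  R6 : ∀ i, 1 ≤ i → i ≤ N - 1 → T i * Y i * T i = Y (i + 1)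
  R7 : ∀ i j, 1 ≤ i → i ≤ N - 1 → 1 ≤ j → j ≤ N → j ≠ i → j ≠ i + 1 → T i * Y j = Y j * T i
  R8 : 2 ≤ N → Xinv 1 * Yinv 2 * X 1 * Y 2 = T 1 * T 1
  R9 : ∀ i, 1 ≤ i → i ≤ N →
    Y i * (((List.range N).map (fun j => X (j + 1))).prod)
      = algebraMap ℂ A q * ((((List.range N).map (fun j => X (j + 1))).prod) * Y i)
  R10 : ∀ i, 1 ≤ i → i ≤ N →
    X i * (((List.range N).map (fun j => Y (j + 1))).prod)
      = algebraMap ℂ A q⁻¹ * ((((List.range N).map (fun j => Y (j + 1))).prod) * X i)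
  R11 : ∀ i j, 1 ≤ i → i ≤ N → 1 ≤ j → j ≤ N → X i * X j = X j * X i
  R12 : ∀ i j, 1 ≤ i → i ≤ N → 1 ≤ j → j ≤ N → Y i * Y j = Y j * Y i

noncomputable def DAHA.D {N : ℕ} {q bt : ℂ} {A : Type*} [Ring A] [Algebra ℂ A]
    (H : DAHA N q bt A) (i : ℕ) : A :=
  (((List.range (i - 1)).reverse.map (fun j => H.Tinv (j + 1))).prod) *
    (H.Xinv 1 * (H.Y 1 - 1)) *
    (((List.range (i - 1)).map (fun j => H.Tinv (j + 1))).prod)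

theorem mul_mul_cancel_left_of_mul_eq_one {M : Type*} [Monoid M] {a b : M} (h : a * b = 1)
    (c : M) : a * (b * c) = c := by
  rw [← mul_assoc, h, one_mul]

theorem Commute.inv_right_of_mul_eq_one {M : Type*} [Monoid M] {a b b' : M} (h : Commute a b)
    (hb : b * b' = 1) (hb' : b' * b = 1) : Commute a b' :=
  Commute.units_inv_right (u := ⟨b, b', hb, hb'⟩) h

theorem eq_algebraMap_sub_inv_add_of_hecke {K R : Type*} [Field K] [Ring R] [Algebra K R]
    {a : K} {t s : R} (hst : s * t = 1)
    (h : (t - algebraMap K R a) * (t + algebraMap K R a⁻¹) = 0) :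
    t = algebraMap K R (a - a⁻¹) + s := by
  rcases eq_or_ne a 0 with rfl | ha
  -- `0⁻¹ = 0`, so the relation reads `t * t = 0` and `R` is trivial.
  · have : (1 : R) = 0 := by
      simpa [mul_assoc, mul_mul_cancel_left_of_mul_eq_one hst, hst] using congrArg (s * s * ·) h
    exact (subsingleton_of_zero_eq_one this.symm).elim _ _
  · have := congrArg (s * ·) h
    simp only [Algebra.algebraMap_eq_smul_one, sub_mul, mul_add, smul_mul_assoc, mul_smul_comm,
      one_mul, mul_one, mul_sub, hst, mul_mul_cancel_left_of_mul_eq_one hst, mul_zero, smul_sub,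
      smul_smul, inv_mul_cancel₀ ha] at this ⊢
    rw [← sub_eq_zero, ← this]
    module

namespace DAHA

variable {N : ℕ} {q bt : ℂ} {A : Type*} [Ring A] [Algebra ℂ A] (H : DAHA N q bt A)

theorem D_one : H.D 1 = H.Xinv 1 * (H.Y 1 - 1) := by
  simp [DAHA.D]

theorem D_two : H.D 2 = H.Tinv 1 * (H.Xinv 1 * (H.Y 1 - 1)) * H.Tinv 1 := by
  simp [DAHA.D]

theorem T_eq_algebraMap_add_Tinv {i : ℕ} (h1 : 1 ≤ i) (h2 : i ≤ N - 1) :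
    H.T i = algebraMap ℂ A (bt - bt⁻¹) + H.Tinv i :=
  eq_algebraMap_sub_inv_add_of_hecke (H.hT i h1 h2).2 (H.R1 i h1 h2)

variable {H}

theorem T_one_mul_Tinv_one (hN : 2 ≤ N) : H.T 1 * H.Tinv 1 = 1 :=
  (H.hT 1 le_rfl (by omega)).1

theorem Tinv_one_mul_T_one (hN : 2 ≤ N) : H.Tinv 1 * H.T 1 = 1 :=
  (H.hT 1 le_rfl (by omega)).2

theorem X_one_mul_Xinv_one (h : 1 ≤ N) : H.X 1 * H.Xinv 1 = 1 :=
  (H.hX 1 le_rfl h).1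

theorem Xinv_one_mul_X_one (h : 1 ≤ N) : H.Xinv 1 * H.X 1 = 1 :=
  (H.hX 1 le_rfl h).2

theorem X_two_eq (hN : 2 ≤ N) : H.X 2 = H.T 1 * H.X 1 * H.T 1 :=
  (H.R4 1 le_rfl (by omega)).symm

theorem Y_two_eq (hN : 2 ≤ N) : H.Y 2 = H.T 1 * H.Y 1 * H.T 1 :=
  (H.R6 1 le_rfl (by omega)).symm

theorem commute_X_one_Tinv_one_mul_Xinv_one_mul_Tinv_one (hN : 2 ≤ N) :
    Commute (H.X 1) (H.Tinv 1 * H.Xinv 1 * H.Tinv 1) := by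
  have ts := T_one_mul_Tinv_one (H := H) hN
  have st := Tinv_one_mul_T_one (H := H) hN
  have hX : Commute (H.X 1) (H.T 1 * H.X 1 * H.T 1) := by
    rw [← X_two_eq hN]
    exact H.R11 1 2 le_rfl (by omega) (by omega) hN
  refine hX.inv_right_of_mul_eq_one ?_ ?_
  · simp only [mul_assoc, mul_mul_cancel_left_of_mul_eq_one ts, ts,
      mul_mul_cancel_left_of_mul_eq_one (X_one_mul_Xinv_one (by omega : 1 ≤ N))]
  · simp only [mul_assoc, mul_mul_cancel_left_of_mul_eq_one st, st,
      mul_mul_cancel_left_of_mul_eq_one (Xinv_one_mul_X_one (by omega : 1 ≤ N))]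

theorem X_one_mul_Y_two (hN : 2 ≤ N) : H.X 1 * H.Y 2 = H.Y 2 * H.X 1 * H.T 1 * H.T 1 := by
  have xx' := X_one_mul_Xinv_one (H := H) (by omega)
  have yy' := (H.hY 2 (by omega) hN).1
  calc H.X 1 * H.Y 2 = H.Y 2 * H.X 1 * (H.Xinv 1 * H.Yinv 2 * H.X 1 * H.Y 2) := by
        simp only [mul_assoc, mul_mul_cancel_left_of_mul_eq_one xx',
          mul_mul_cancel_left_of_mul_eq_one yy']
    _ = H.Y 2 * H.X 1 * H.T 1 * H.T 1 := by rw [H.R8 hN]; simp only [mul_assoc]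

theorem X_one_mul_Tinv_one_mul_Xinv_one (hN : 2 ≤ N) :
    H.X 1 * H.Tinv 1 * H.Xinv 1 = H.Tinv 1 * H.Xinv 1 * H.Tinv 1 * H.X 1 * H.T 1 := by
  rw [← (commute_X_one_Tinv_one_mul_Xinv_one_mul_Tinv_one hN).eq]
  simp only [mul_assoc, Tinv_one_mul_T_one hN, mul_one]

theorem T_one_mul_X_one_mul_Tinv_one_mul_Xinv_one (hN : 2 ≤ N) :
    H.T 1 * H.X 1 * H.Tinv 1 * H.Xinv 1 = H.Xinv 1 * H.Tinv 1 * H.X 1 * H.T 1 := by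
  calc _ = H.T 1 * (H.X 1 * H.Tinv 1 * H.Xinv 1) := by simp only [mul_assoc]
    _ = _ := by
      rw [X_one_mul_Tinv_one_mul_Xinv_one hN]
      simp only [mul_assoc, mul_mul_cancel_left_of_mul_eq_one (T_one_mul_Tinv_one hN)]

theorem X_one_mul_T_one_mul_Y_one (hN : 2 ≤ N) :
    H.X 1 * H.T 1 * H.Y 1 = H.T 1 * H.Y 1 * H.T 1 * H.X 1 * H.T 1 := by
  have h := congrArg (· * H.Tinv 1) (X_one_mul_Y_two (H := H) hN)
  simp only [Y_two_eq hN, mul_assoc, T_one_mul_Tinv_one hN, mul_one] at h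
  simpa only [mul_assoc] using h

theorem X_one_mul_D_two (hN : 2 ≤ N) :
    H.X 1 * H.D 2 = H.D 2 * H.T 1 * H.T 1 * H.X 1
        + algebraMap ℂ A (bt - bt⁻¹) * H.Tinv 1 := by
  have ts := T_one_mul_Tinv_one (H := H) hN
  have st := Tinv_one_mul_T_one (H := H) hN
  have hY : H.X 1 * H.Tinv 1 * H.Xinv 1 * H.Y 1 * H.Tinv 1
      = H.Tinv 1 * H.Xinv 1 * H.Y 1 * H.T 1 * H.X 1 :=
    calc _ = H.Tinv 1 * H.Xinv 1 * H.Tinv 1 * (H.X 1 * H.T 1 * H.Y 1) * H.Tinv 1 := by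
          rw [X_one_mul_Tinv_one_mul_Xinv_one hN]; simp only [mul_assoc]
      _ = H.Tinv 1 * H.Xinv 1 * H.Tinv 1 * (H.T 1 * H.Y 1 * H.T 1 * H.X 1 * H.T 1)
            * H.Tinv 1 := by
          rw [X_one_mul_T_one_mul_Y_one hN]
      _ = _ := by
          simp only [mul_assoc, mul_mul_cancel_left_of_mul_eq_one st, ts, mul_one]
  have hT : H.Tinv 1 * H.Xinv 1 * H.T 1 * H.X 1
      = algebraMap ℂ A (bt - bt⁻¹) * H.Tinv 1 + H.Tinv 1 * H.Xinv 1 * H.Tinv 1 * H.X 1 := by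
    rw [T_eq_algebraMap_add_Tinv H le_rfl (by omega)]
    simp only [mul_add, add_mul, mul_assoc, Algebra.left_comm,
      Xinv_one_mul_X_one (H := H) (by omega), mul_one]
    rw [Algebra.commutes]
  have hX := (commute_X_one_Tinv_one_mul_Xinv_one_mul_Tinv_one (H := H) hN).eq
  rw [D_two]
  simp only [mul_sub, sub_mul, mul_one, mul_assoc, mul_mul_cancel_left_of_mul_eq_one st]
  simp only [mul_assoc] at hY hT hX
  rw [hY, hT, hX]
  abel

theorem D_one_mul_X_two (hN : 2 ≤ N) :
    H.D 1 * H.X 2 = H.X 2 * H.Tinv 1 * H.Tinv 1 * H.D 1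
        - algebraMap ℂ A (bt - bt⁻¹) * H.T 1 := by
  have ts := T_one_mul_Tinv_one (H := H) hN
  have st := Tinv_one_mul_T_one (H := H) hN
  have hY : H.Xinv 1 * H.Y 1 * H.T 1 * H.X 1 * H.T 1
      = H.T 1 * H.X 1 * H.Tinv 1 * H.Xinv 1 * H.Y 1 :=
    calc _ = H.Xinv 1 * H.Tinv 1 * (H.T 1 * H.Y 1 * H.T 1 * H.X 1 * H.T 1) := by
          simp only [mul_assoc, mul_mul_cancel_left_of_mul_eq_one st]
      _ = H.Xinv 1 * H.Tinv 1 * H.X 1 * H.T 1 * H.Y 1 := by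
          rw [← X_one_mul_T_one_mul_Y_one hN]; simp only [mul_assoc]
      _ = _ := by rw [T_one_mul_X_one_mul_Tinv_one_mul_Xinv_one hN]
  have hT : H.Xinv 1 * H.T 1 * H.X 1 * H.T 1
      = algebraMap ℂ A (bt - bt⁻¹) * H.T 1 + H.T 1 * H.X 1 * H.Tinv 1 * H.Xinv 1 := by
    rw [T_one_mul_X_one_mul_Tinv_one_mul_Xinv_one hN]
    nth_rewrite 1 [T_eq_algebraMap_add_Tinv H le_rfl (by omega)]
    simp only [mul_add, add_mul, mul_assoc, Algebra.left_comm,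
      mul_mul_cancel_left_of_mul_eq_one (Xinv_one_mul_X_one (H := H) (by omega))]
  rw [D_one, X_two_eq hN]
  simp only [mul_sub, sub_mul, mul_one, mul_assoc, mul_mul_cancel_left_of_mul_eq_one ts]
  simp only [mul_assoc] at hY hT
  rw [hY, hT]
  abel

end DAHA

theorem statement10 {A : Type*} [Ring A] [Algebra ℂ A] (N : ℕ) (q bt : ℂ)
    (hN : 2 ≤ N) (H : DAHA N q bt A) :
    H.X 1 * H.D 2 = H.D 2 * H.T 1 * H.T 1 * H.X 1
        + algebraMap ℂ A (bt - bt⁻¹) * H.Tinv 1 ∧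
    H.D 1 * H.X 2 = H.X 2 * H.Tinv 1 * H.Tinv 1 * H.D 1
        - algebraMap ℂ A (bt - bt⁻¹) * H.T 1 :=
  ⟨H.X_one_mul_D_two hN, H.D_one_mul_X_two hN⟩
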